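/- arXiv:2405.05102 — 2 statements merged into one kernel-verified Lean document; each statement's English description precedes it below -/
import Mathlib

section
/- For every integer k ≥ 1, Σ_{j=1}^k Σ_{m=k+1}^∞ 1/((m−j)·(m−1)) = π²/6 (in particular each inner series converges). -/
open Real Filter Topology MeasureTheory

/-- The harmonic number `h n = ∑_{i=1}^n 1/i`, with `h 0 = 0`. -/
noncomputable def harmonic' (n : ℕ) : ℝ := ∑ i ∈ Finset.Icc 1 n, (1 : ℝ) / i

/-- One-step transition probabilities of the harmonic descent chain,
`p j i = 1/((j-i)·h_{j-1})` for `1 ≤ i < j`. -/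
noncomputable def hdP (j i : ℕ) : ℝ := 1 / (((j : ℝ) - (i : ℝ)) * harmonic' (j - 1))

/-- `b 1 = 1` and `b i = 6 h_{i-1} / (π² (i-1))` for `i ≥ 2`. -/
noncomputable def hdB (i : ℕ) : ℝ :=
  if i = 1 then 1 else 6 * harmonic' (i - 1) / (Real.pi ^ 2 * ((i : ℝ) - 1))

/-!
Write `S a b = ∑ₙ 1 / ((n + a) (n + b))`. The inner sum for `j` is `S (k + 1 - j) k`, so the
double sum is `F k = ∑_{a=1}^k S a k`. Peeling off the term `n = 0` gives
`S a k = 1 / (a k) + S (a + 1) (k + 1)`, and the telescoping series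
`S 1 (k + 1) = (1 / k) ∑_{a=1}^k 1 / a` is exactly the sum of the peeled terms, so `F (k + 1) = F k`.
Hence `F k = F 1 = ∑ 1 / n² = π² / 6`.
-/

open Finset

lemma summable_one_div_add_mul_add {a b : ℝ} (ha : 0 ≤ a) (hb : 0 ≤ b) :
    Summable fun n : ℕ => 1 / ((n + a) * (n + b)) := by
  refine (summable_nat_add_iff 1).mp ?_
  have hsq : Summable fun n : ℕ => 1 / ((n + 1 : ℕ) : ℝ) ^ 2 :=
    (summable_nat_add_iff 1).mpr (Real.summable_one_div_nat_pow.mpr one_lt_two)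
  refine hsq.of_nonneg_of_le (fun n => by positivity) fun n => ?_
  rw [sq]
  gcongr <;> push_cast <;> linarith

lemma tsum_one_div_add_mul_add {a b : ℝ} (ha : 0 ≤ a) (hb : 0 ≤ b) :
    ∑' n : ℕ, 1 / ((n + a) * (n + b)) =
      1 / (a * b) + ∑' n : ℕ, 1 / ((n + (a + 1)) * (n + (b + 1))) := by
  rw [(summable_one_div_add_mul_add ha hb).tsum_eq_zero_add]
  push_cast
  simp only [zero_add, add_assoc, add_comm (1 : ℝ)]

lemma hasSum_sub_succ_of_antitone {f : ℕ → ℝ} (hmono : Antitone f)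
    (hlim : Tendsto f atTop (𝓝 0)) : HasSum (fun n => f n - f (n + 1)) (f 0) := by
  rw [hasSum_iff_tendsto_nat_of_nonneg (fun n => sub_nonneg.mpr (hmono n.le_succ))]
  simp only [sum_range_sub']
  simpa using tendsto_const_nhds.sub hlim

lemma hasSum_sub_add_of_antitone {f : ℕ → ℝ} (hmono : Antitone f)
    (hlim : Tendsto f atTop (𝓝 0)) (k : ℕ) :
    HasSum (fun n => f n - f (n + k)) (∑ i ∈ range k, f i) := by
  have hshift (i : ℕ) : HasSum (fun n => f (n + i) - f (n + i + 1)) (f i) := by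
    simpa [add_right_comm] using hasSum_sub_succ_of_antitone (f := fun n => f (n + i))
      (fun m n hmn => hmono (by omega)) (hlim.comp (tendsto_add_atTop_nat i))
  convert hasSum_sum fun i (_ : i ∈ range k) => hshift i using 2 with n
  simpa [add_assoc] using (sum_range_sub' (fun i => f (n + i)) k).symm

lemma hasSum_one_div_add_one_mul_add_succ {k : ℕ} (hk : 0 < k) :
    HasSum (fun n : ℕ => 1 / ((n + 1) * (n + (k + 1) : ℝ)))
      (∑ i ∈ range k, 1 / ((i + 1) * k : ℝ)) := by
  have hanti : Antitone fun n : ℕ => 1 / ((n : ℝ) + 1) := fun m n hmn => by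
    dsimp only
    gcongr
  have h := (hasSum_sub_add_of_antitone hanti tendsto_one_div_add_atTop_nhds_zero_nat k).div_const k
  have hk' : (k : ℝ) ≠ 0 := by positivity
  rw [show ∑ i ∈ range k, 1 / ((i + 1) * k : ℝ) = (∑ i ∈ range k, 1 / ((i : ℝ) + 1)) / k by
    simp only [sum_div, div_div]]
  refine h.congr_fun fun n => ?_
  push_cast
  field_simp
  ring

lemma sum_range_succ_tsum_one_div_add_mul_add {k : ℕ} (hk : 0 < k) :
    ∑ i ∈ range (k + 1), ∑' n : ℕ, 1 / ((n + (i + 1)) * (n + (k + 1)) : ℝ) =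
      ∑ i ∈ range k, ∑' n : ℕ, 1 / ((n + (i + 1)) * (n + k) : ℝ) := by
  have hpeel (i : ℕ) : ∑' n : ℕ, 1 / ((n + (i + 1)) * (n + k) : ℝ) =
      1 / ((i + 1) * k : ℝ) + ∑' n : ℕ, 1 / ((n + ((i + 1 : ℕ) + 1)) * (n + (k + 1)) : ℝ) := by
    rw [tsum_one_div_add_mul_add (by positivity) (by positivity)]
    push_cast
    rfl
  rw [sum_range_succ', sum_congr rfl fun i _ => hpeel i, sum_add_distrib,
    ← (hasSum_one_div_add_one_mul_add_succ hk).tsum_eq]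
  push_cast
  simp only [zero_add, add_comm]

lemma sum_range_tsum_one_div_add_mul_add_eq_pi_sq_div_six {k : ℕ} (hk : 1 ≤ k) :
    ∑ i ∈ range k, ∑' n : ℕ, 1 / ((n + (i + 1)) * (n + k) : ℝ) = π ^ 2 / 6 := by
  induction k, hk using Nat.le_induction with
  | base =>
    simpa [sq] using ((hasSum_nat_add_iff' 1).mpr hasSum_zeta_two).tsum_eq
  | succ k hk ih =>
    push_cast
    rw [sum_range_succ_tsum_one_div_add_mul_add hk, ih]

lemma hasSum_ite_lt_iff {α : Type*} [AddCommMonoid α] [TopologicalSpace α] (f : ℕ → α) (k : ℕ)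
    (s : α) : HasSum (fun m => if k < m then f m else 0) s ↔ HasSum (fun n => f (n + (k + 1))) s := by
  rw [← (add_left_injective (k + 1)).hasSum_iff]
  · simp only [Function.comp_def, show ∀ n, k < n + (k + 1) by omega, if_true]
  · intro m hm
    rw [if_neg]
    intro hkm
    exact hm ⟨m - (k + 1), Nat.sub_add_cancel hkm⟩

theorem double_sum_eq_pi_sq_div_six (k : ℕ) (hk : 1 ≤ k) :
    (∀ j : ℕ, 1 ≤ j → j ≤ k →
      Summable (fun m : ℕ => if k < m then 1 / (((m : ℝ) - j) * ((m : ℝ) - 1)) else 0)) ∧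
    ∑ j ∈ Finset.Icc 1 k,
        ∑' m : ℕ, (if k < m then 1 / (((m : ℝ) - j) * ((m : ℝ) - 1)) else 0)
      = Real.pi ^ 2 / 6 := by
  have hinner (j : ℕ) (hj : j ≤ k) :
      HasSum (fun m : ℕ => if k < m then 1 / (((m : ℝ) - j) * ((m : ℝ) - 1)) else 0)
        (∑' n : ℕ, 1 / ((n + ((k - j : ℕ) + 1)) * (n + k) : ℝ)) := by
    rw [hasSum_ite_lt_iff]
    refine (summable_one_div_add_mul_add (by positivity) k.cast_nonneg).hasSum.congr_fun fun n => ?_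
    push_cast [hj]
    ring_nf
  refine ⟨fun j _ hj => (hinner j hj).summable, ?_⟩
  rw [sum_congr rfl fun j hj => (hinner j (mem_Icc.mp hj).2).tsum_eq,
    ← sum_range_tsum_one_div_add_mul_add_eq_pi_sq_div_six hk]
  refine sum_nbij' (fun j => k - j) (fun i => k - i) ?_ ?_ ?_ ?_ fun j _ => rfl <;>
    intro i hi <;> simp only [mem_Icc, mem_range] at hi ⊢ <;> omega
end

section
/- There exists a constant K < ∞ such that for all integers 1 ≤ i < L < n, Σ_{j=L+1}^n a(n,j)·p(j,i) ≤ K/(log L − log i). -/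
open Real Filter Topology MeasureTheory

/-! The first-entrance distribution `i ↦ ∑_{j=L+1}^n a(n,j) p(j,i)` of the chain from `n` into
`{1,…,L}` has total mass one, and it is nondecreasing in `i` because `p(j,i)` grows with `i`.
Its value at `i` is therefore at most its average over `{i,…,L}`, i.e. at most
`1/(L+1-i) ≤ 1/(log L - log i)`, so `K = 1` works. -/

open Finset

lemma harmonic'_pos {m : ℕ} (hm : 1 ≤ m) : 0 < harmonic' m :=
  sum_pos (fun i hi => by have : 1 ≤ i := (mem_Icc.1 hi).1; positivity) ⟨1, by simp [hm]⟩

lemma hdP_nonneg {i j : ℕ} (hij : i ≤ j) : 0 ≤ hdP j i := by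
  have : (0 : ℝ) ≤ j - i := sub_nonneg.2 (by exact_mod_cast hij)
  unfold hdP harmonic'
  positivity

lemma hdP_le_hdP {i k j : ℕ} (hik : i ≤ k) (hkj : k < j) : hdP j i ≤ hdP j k := by
  have hk : (0 : ℝ) < j - k := sub_pos.2 (by exact_mod_cast hkj)
  have hi : (i : ℝ) ≤ k := by exact_mod_cast hik
  unfold hdP harmonic'
  rw [one_div, one_div, mul_inv, mul_inv]
  gcongr

lemma sum_hdP_eq_one {j : ℕ} (hj : 1 ≤ j) : ∑ i ∈ Icc 1 j, hdP (j + 1) i = 1 := by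
  have hreflect : ∑ i ∈ Icc 1 j, (1 : ℝ) / ((j + 1 : ℕ) - i : ℝ) = harmonic' j := by
    have h := sum_Ico_reflect (fun m : ℕ => (1 : ℝ) / m) 1 (m := j + 1) (n := j + 1) (by omega)
    simp only [Nat.add_sub_cancel, Nat.add_sub_cancel_left, Ico_add_one_right_eq_Icc] at h
    rw [harmonic', ← h]
    refine sum_congr rfl fun i hi => ?_
    rw [Nat.cast_sub ((mem_Icc.1 hi).2.trans j.le_succ)]
  simp only [hdP, Nat.add_sub_cancel, ← div_div, ← sum_div, hreflect]
  exact div_self (harmonic'_pos hj).ne'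

section FirstEntrance

variable {p : ℕ → ℕ → ℝ} {q : ℕ → ℝ} {n : ℕ}

/-- `q` plays the role of `a n`, the occupation probabilities of the chain with kernel `p`
started at `n`. -/
noncomputable def firstEntrance (p : ℕ → ℕ → ℝ) (q : ℕ → ℝ) (n L i : ℕ) : ℝ :=
  ∑ j ∈ Ioc L n, q j * p j i

lemma firstEntrance_eq_add {L : ℕ} (hLn : L < n) (i : ℕ) :
    firstEntrance p q n L i = q (L + 1) * p (L + 1) i + firstEntrance p q n (L + 1) i := by
  rw [firstEntrance, ← insert_Ioc_add_one_left_eq_Ioc hLn, sum_insert left_notMem_Ioc]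
  rfl

variable (hq_diag : q n = 1) (hq_rec : ∀ i, 1 ≤ i → i < n → q i = firstEntrance p q n i i)
include hq_diag hq_rec

lemma occupation_nonneg (hp : ∀ j, ∀ i < j, 0 ≤ p j i) {i : ℕ} (hi : 1 ≤ i) (hin : i ≤ n) :
    0 ≤ q i := by
  induction i using Nat.strong_decreasing_induction with
  | base => exact ⟨n, fun m hm _ hmn => absurd hmn (by omega)⟩
  | step i ih =>
    rcases hin.eq_or_lt with rfl | hin
    · exact hq_diag.ge.trans' zero_le_one
    · rw [hq_rec i hi hin]
      refine sum_nonneg fun j hj => ?_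
      obtain ⟨hij, hjn⟩ := mem_Ioc.1 hj
      exact mul_nonneg (ih j hij (by omega) hjn) (hp j i hij)

lemma sum_firstEntrance_eq_one (hp : ∀ j, 1 ≤ j → ∑ i ∈ Icc 1 j, p (j + 1) i = 1) {L : ℕ}
    (hL : 1 ≤ L) (hLn : L < n) : ∑ i ∈ Icc 1 L, firstEntrance p q n L i = 1 := by
  induction L using Nat.strong_decreasing_induction with
  | base => exact ⟨n, fun m hm _ hmn => absurd hmn (by omega)⟩
  | step L ih =>
    -- peeling off `j = L + 1` gives mass `q (L + 1)` on `{1,…,L}`, which by the recursion is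
    -- exactly the mass that `firstEntrance p q n (L + 1)` puts on `L + 1`
    simp only [firstEntrance_eq_add hLn, sum_add_distrib, ← mul_sum, hp L hL]
    rcases (show L + 1 ≤ n from hLn).eq_or_lt with rfl | hLn'
    · simp [firstEntrance, hq_diag]
    · have h := ih (L + 1) L.lt_succ_self (by omega) hLn'
      rw [sum_Icc_succ_top (by omega), ← hq_rec (L + 1) (by omega) hLn'] at h
      linarith

lemma firstEntrance_le (hp_nonneg : ∀ j, ∀ i < j, 0 ≤ p j i)
    (hp_mono : ∀ {i k j}, i ≤ k → k < j → p j i ≤ p j k)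
    (hp_sum : ∀ j, 1 ≤ j → ∑ i ∈ Icc 1 j, p (j + 1) i = 1) {L i : ℕ} (hi : 1 ≤ i) (hiL : i ≤ L)
    (hLn : L < n) : firstEntrance p q n L i ≤ 1 / ((L : ℝ) + 1 - i) := by
  have hq : ∀ j ∈ Ioc L n, 0 ≤ q j := fun j hj =>
    occupation_nonneg hq_diag hq_rec hp_nonneg (by grind) (mem_Ioc.1 hj).2
  have hF_nonneg : ∀ k ∈ Icc 1 L, 0 ≤ firstEntrance p q n L k := fun k hk =>
    sum_nonneg fun j hj => mul_nonneg (hq j hj) (hp_nonneg j k (by grind))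
  have hF_mono : ∀ k ∈ Icc i L, firstEntrance p q n L i ≤ firstEntrance p q n L k := fun k hk =>
    sum_le_sum fun j hj =>
      mul_le_mul_of_nonneg_left (hp_mono (mem_Icc.1 hk).1 (by grind)) (hq j hj)
  have hcard : ((L : ℝ) + 1 - i) = #(Icc i L) := by
    rw [Nat.card_Icc, Nat.cast_sub (by omega)]
    push_cast
    ring
  rw [le_div_iff₀ (by linarith [(Nat.cast_le (α := ℝ)).2 hiL]), mul_comm, hcard, ← nsmul_eq_mul,
    ← sum_const]
  calc ∑ _ ∈ Icc i L, firstEntrance p q n L i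
      ≤ ∑ k ∈ Icc i L, firstEntrance p q n L k := sum_le_sum hF_mono
    _ ≤ ∑ k ∈ Icc 1 L, firstEntrance p q n L k :=
      sum_le_sum_of_subset_of_nonneg (Icc_subset_Icc_left hi) fun k hk _ => hF_nonneg k hk
    _ = 1 := sum_firstEntrance_eq_one hq_diag hq_rec hp_sum (hi.trans hiL) hLn

end FirstEntrance

lemma log_sub_log_le_sub {x y : ℝ} (hx : 1 ≤ x) (hxy : x ≤ y) : log y - log x ≤ y - x := by
  have hx0 : 0 < x := by linarith
  calc log y - log x = log (y / x) := (log_div (by linarith) hx0.ne').symm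
    _ ≤ y / x - 1 := log_le_sub_one_of_pos (div_pos (by linarith) hx0)
    _ = (y - x) / x := by field_simp
    _ ≤ y - x := div_le_self (by linarith) hx

theorem hd_first_entrance_bound
    (a : ℕ → ℕ → ℝ)
    (ha_diag : ∀ n : ℕ, 1 ≤ n → a n n = 1)
    (ha_rec : ∀ n i : ℕ, 1 ≤ i → i < n →
      a n i = ∑ j ∈ Finset.Ioc i n, a n j * hdP j i) :
    ∃ K : ℝ, ∀ n L i : ℕ, 1 ≤ i → i < L → L < n →
      ∑ j ∈ Finset.Ioc L n, a n j * hdP j i ≤ K / (Real.log L - Real.log i) := by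
  refine ⟨1, fun n L i hi hiL hLn => ?_⟩
  have hi' : (1 : ℝ) ≤ i := by exact_mod_cast hi
  have hiL' : (i : ℝ) < L := by exact_mod_cast hiL
  have hlog_pos : 0 < log L - log i := sub_pos.2 (log_lt_log (by linarith) hiL')
  calc ∑ j ∈ Ioc L n, a n j * hdP j i ≤ 1 / ((L : ℝ) + 1 - i) :=
        firstEntrance_le (ha_diag n (by omega)) (ha_rec n) (fun _ _ h => hdP_nonneg h.le)
          hdP_le_hdP (fun _ => sum_hdP_eq_one) hi hiL.le hLn
    _ ≤ 1 / (log L - log i) :=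
        one_div_le_one_div_of_le hlog_pos (by linarith [log_sub_log_le_sub hi' hiL'.le])
end
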